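/- Let g : ℝ → ℝ satisfy Conditions (G) for some 1 < α < 3/2, set σ = −g'(0), and define B[P](x) = g(P(x)) − 1 + σP(x). Then B maps L^{2α}(ℝ³) into L²(ℝ³) and is continuous; more precisely, there is a constant C such that for all P, Q ∈ L^{2α}(ℝ³): ‖B[P] − B[Q]‖_{L²(ℝ³)} ≤ C (‖P‖_{L^{2α}(ℝ³)} + ‖Q‖_{L^{2α}(ℝ³)})^{α−1} ‖P − Q‖_{L^{2α}(ℝ³)}. -/

import Mathlib

/-!
The mean value theorem together with the Hölder bound |g'(r) − g'(0)| ≤ C₂|r|^{α−1} gives the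
pointwise estimate |B(a) − B(b)| ≤ C₂ (|a| + |b|)^{α−1} |a − b|. Hölder's inequality with
1/2 = (α − 1)/(2α) + 1/(2α) turns it into the L² estimate, because
‖(|P| + |Q|)^{α−1}‖_{2α/(α−1)} = ‖|P| + |Q|‖_{2α}^{α−1}. Since B(0) = 0, the case Q = 0 shows
that B[P] ∈ L².
-/

open MeasureTheory Real Set
open scoped ENNReal

noncomputable section

abbrev R3 : Type := EuclideanSpace ℝ (Fin 3)

/-- Conditions (G) on g with exponent α. -/
def CondG (g : ℝ → ℝ) (α : ℝ) : Prop :=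
  g 0 = 1 ∧
  ContDiff ℝ 2 g ∧
  (∀ r : ℝ, deriv g r < 0) ∧
  (∀ r : ℝ, g 0 + deriv g 0 * r ≤ g r) ∧
  ∃ C₁ : ℝ, 0 < C₁ ∧ ∃ C₂ : ℝ, 0 < C₂ ∧ ∀ r : ℝ,
    g r - (g 0 + deriv g 0 * r) ≤ C₁ * |r| ^ α ∧
    |deriv g r - deriv g 0| ≤ C₂ * |r| ^ (α - 1)

theorem abs_sub_sub_deriv_zero_mul_le {g : ℝ → ℝ} (hg : Differentiable ℝ g) {C s : ℝ}
    (hs : 0 ≤ s) (hC : ∀ r, |deriv g r - deriv g 0| ≤ C * |r| ^ s) (a b : ℝ) :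
    |g a - g b - deriv g 0 * (a - b)| ≤ C * (|a| + |b|) ^ s * |a - b| := by
  have hC₀ : 0 ≤ C := by simpa using (abs_nonneg _).trans (hC 1)
  set R := |a| + |b|
  have hasDeriv (c : ℝ) :
      HasDerivAt (fun r => g r - deriv g 0 * r) (deriv g c - deriv g 0) c := by
    simpa using (hg c).hasDerivAt.fun_sub ((hasDerivAt_id c).const_mul (deriv g 0))
  have hbound : ∀ c ∈ Icc (-R) R, ‖deriv (fun r => g r - deriv g 0 * r) c‖ ≤ C * R ^ s := by
    intro c hc
    rw [(hasDeriv c).deriv]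
    exact (hC c).trans (by gcongr; exact abs_le.mpr hc)
  have hmem {c : ℝ} (h : |c| ≤ R) : c ∈ Icc (-R) R := abs_le.mp h
  have key := (convex_Icc (-R) R).norm_image_sub_le_of_norm_deriv_le
    (fun c _ => (hasDeriv c).differentiableAt) hbound
    (hmem (le_add_of_nonneg_left (abs_nonneg a))) (hmem (le_add_of_nonneg_right (abs_nonneg b)))
  rw [Real.norm_eq_abs, Real.norm_eq_abs] at key
  convert key using 2
  ring

namespace MeasureTheory

variable {X E G : Type*} [MeasurableSpace X] {μ : Measure X}
  [NormedAddCommGroup E] [NormedAddCommGroup G]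

theorem eLpNorm_norm_add_norm_rpow_le {u v : X → E} (hu : AEStronglyMeasurable u μ)
    (hv : AEStronglyMeasurable v μ) {s : ℝ} (hs : 0 < s) {q : ℝ≥0∞}
    (hq : 1 ≤ q * ENNReal.ofReal s) :
    eLpNorm (fun x => (‖u x‖ + ‖v x‖) ^ s) q μ ≤
      (eLpNorm u (q * ENNReal.ofReal s) μ + eLpNorm v (q * ENNReal.ofReal s) μ) ^ s := by
  have hnorm : (fun x => (‖u x‖ + ‖v x‖) ^ s) = fun x => ‖‖u x‖ + ‖v x‖‖ ^ s := by
    ext x; rw [Real.norm_of_nonneg (by positivity)]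
  rw [hnorm, eLpNorm_norm_rpow _ hs]
  gcongr
  calc eLpNorm (fun x => ‖u x‖ + ‖v x‖) (q * ENNReal.ofReal s) μ
      ≤ eLpNorm (fun x => ‖u x‖) (q * ENNReal.ofReal s) μ +
          eLpNorm (fun x => ‖v x‖) (q * ENNReal.ofReal s) μ := eLpNorm_add_le hu.norm hv.norm hq
    _ = _ := by rw [eLpNorm_norm, eLpNorm_norm]

variable [NormedSpace ℝ E] {F : E → G} {C s : ℝ} {p q r : ℝ≥0∞} [ENNReal.HolderTriple q p r]

theorem eLpNorm_comp_sub_comp_le (hC : 0 ≤ C) (hs : 0 < s)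
    (hF : ∀ a b, ‖F a - F b‖ ≤ C * (‖a‖ + ‖b‖) ^ s * ‖a - b‖)
    (hp : 1 ≤ p) (hqp : q * ENNReal.ofReal s = p)
    {u v : X → E} (hu : AEStronglyMeasurable u μ) (hv : AEStronglyMeasurable v μ) :
    eLpNorm (fun x => F (u x) - F (v x)) r μ ≤
      ENNReal.ofReal C * (eLpNorm u p μ + eLpNorm v p μ) ^ s * eLpNorm (u - v) p μ := by
  set φ : X → ℝ := fun x => (‖u x‖ + ‖v x‖) ^ s
  have hφ : AEStronglyMeasurable φ μ :=
    (continuous_rpow_const hs.le).comp_aestronglyMeasurable (hu.norm.add hv.norm)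
  have hpointwise (x : X) : ‖F (u x) - F (v x)‖ ≤ ‖(C • (φ • (u - v))) x‖ := by
    have : 0 ≤ φ x := by positivity
    simpa [norm_smul, abs_of_nonneg hC, abs_of_nonneg this, mul_assoc] using hF (u x) (v x)
  calc eLpNorm (fun x => F (u x) - F (v x)) r μ
      ≤ ‖C‖ₑ * eLpNorm (φ • (u - v)) r μ := by
        rw [← eLpNorm_const_smul]; exact eLpNorm_mono hpointwise
    _ ≤ ENNReal.ofReal C * (eLpNorm φ q μ * eLpNorm (u - v) p μ) := by
        rw [Real.enorm_of_nonneg hC]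
        gcongr
        exact eLpNorm_smul_le_mul_eLpNorm (hu.sub hv) hφ
    _ ≤ ENNReal.ofReal C * (eLpNorm u p μ + eLpNorm v p μ) ^ s * eLpNorm (u - v) p μ := by
        rw [mul_assoc]
        gcongr
        rw [← hqp] at hp ⊢
        exact eLpNorm_norm_add_norm_rpow_le hu hv hs hp

theorem MemLp.eLpNorm_comp_sub_comp_le (hC : 0 ≤ C) (hs : 0 < s)
    (hF : ∀ a b, ‖F a - F b‖ ≤ C * (‖a‖ + ‖b‖) ^ s * ‖a - b‖)
    (hp : 1 ≤ p) (hqp : q * ENNReal.ofReal s = p)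
    {u v : X → E} (hu : MemLp u p μ) (hv : MemLp v p μ) :
    eLpNorm (fun x => F (u x) - F (v x)) r μ ≤
      ENNReal.ofReal (C * ((eLpNorm u p μ).toReal + (eLpNorm v p μ).toReal) ^ s *
        (eLpNorm (u - v) p μ).toReal) := by
  rw [ENNReal.ofReal_mul (by positivity), ENNReal.ofReal_mul hC,
    ← ENNReal.ofReal_rpow_of_nonneg (by positivity) hs.le,
    ENNReal.ofReal_add ENNReal.toReal_nonneg ENNReal.toReal_nonneg,
    ENNReal.ofReal_toReal hu.eLpNorm_ne_top, ENNReal.ofReal_toReal hv.eLpNorm_ne_top,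
    ENNReal.ofReal_toReal (hu.sub hv).eLpNorm_ne_top]
  exact MeasureTheory.eLpNorm_comp_sub_comp_le hC hs hF hp hqp hu.1 hv.1

theorem MemLp.comp_of_norm_sub_le (hFc : Continuous F) (hF0 : F 0 = 0) (hC : 0 ≤ C)
    (hs : 0 < s) (hF : ∀ a b, ‖F a - F b‖ ≤ C * (‖a‖ + ‖b‖) ^ s * ‖a - b‖)
    (hp : 1 ≤ p) (hqp : q * ENNReal.ofReal s = p) {u : X → E} (hu : MemLp u p μ) :
    MemLp (fun x => F (u x)) r μ := by
  refine ⟨hFc.comp_aestronglyMeasurable hu.1, ?_⟩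
  have := hu.eLpNorm_comp_sub_comp_le (r := r) hC hs hF hp hqp (MemLp.zero (μ := μ))
  simp only [Pi.zero_apply, hF0, sub_zero] at this
  exact this.trans_lt ENNReal.ofReal_lt_top

end MeasureTheory

theorem B_maps_L2alpha_to_L2_continuously_general
    (g : ℝ → ℝ) (α : ℝ) (hα : 1 < α) (hg : CondG g α) :
    ∃ C : ℝ, 0 < C ∧ ∀ P Q : R3 → ℝ,
      MemLp P (ENNReal.ofReal (2 * α)) (volume : Measure R3) →
      MemLp Q (ENNReal.ofReal (2 * α)) (volume : Measure R3) →
      MemLp (fun x => g (P x) - 1 + -deriv g 0 * P x) 2 (volume : Measure R3) ∧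
      eLpNorm
          (fun x => (g (P x) - 1 + -deriv g 0 * P x) - (g (Q x) - 1 + -deriv g 0 * Q x)) 2
          (volume : Measure R3) ≤
        ENNReal.ofReal
          (C * ((eLpNorm P (ENNReal.ofReal (2 * α)) volume).toReal +
                (eLpNorm Q (ENNReal.ofReal (2 * α)) volume).toReal) ^ (α - 1) *
            (eLpNorm (fun x => P x - Q x) (ENNReal.ofReal (2 * α)) volume).toReal) := by
  obtain ⟨hg0, hg2, -, -, _, -, C, hC, hbd⟩ := hg
  have hs : 0 < α - 1 := by linarith
  set F : ℝ → ℝ := fun r => g r - 1 + -deriv g 0 * r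
  have hFc : Continuous F := by have := hg2.continuous; fun_prop
  have hF (a b : ℝ) : ‖F a - F b‖ ≤ C * (‖a‖ + ‖b‖) ^ (α - 1) * ‖a - b‖ := by
    have := abs_sub_sub_deriv_zero_mul_le (hg2.differentiable (by norm_num)) hs.le
      (fun r => (hbd r).2) a b
    simp only [Real.norm_eq_abs, F]
    convert this using 2
    ring
  have hHolder :
      ENNReal.HolderTriple (ENNReal.ofReal (2 * α / (α - 1))) (ENNReal.ofReal (2 * α)) 2 := by
    have h : Real.HolderTriple (2 * α / (α - 1)) (2 * α) 2 :=
      ⟨by field_simp; ring, by positivity, by positivity⟩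
    simpa using h.ennrealOfReal
  have hqp :
      ENNReal.ofReal (2 * α / (α - 1)) * ENNReal.ofReal (α - 1) = ENNReal.ofReal (2 * α) := by
    rw [← ENNReal.ofReal_mul (by positivity), div_mul_cancel₀ _ hs.ne']
  have hp : 1 ≤ ENNReal.ofReal (2 * α) := ENNReal.one_le_ofReal.2 (by linarith)
  refine ⟨C, hC, fun P Q hP hQ => ⟨?_, hP.eLpNorm_comp_sub_comp_le hC.le hs hF hp hqp hQ⟩⟩
  exact hP.comp_of_norm_sub_le hFc (by simp [F, hg0]) hC.le hs hF hp hqp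

/-- Continuity of the operator B (Lemma 3.1): with σ = −g'(0) and
B[P] = g∘P − 1 + σP, the operator B maps L^{2α}(ℝ³) into L²(ℝ³) and
‖B[P] − B[Q]‖_{L²} ≤ C(‖P‖_{L^{2α}} + ‖Q‖_{L^{2α}})^{α−1}‖P − Q‖_{L^{2α}}. -/
theorem B_maps_L2alpha_to_L2_continuously
    (g : ℝ → ℝ) (α : ℝ) (hα : 1 < α) (hα' : α < 3 / 2) (hg : CondG g α) :
    ∃ C : ℝ, 0 < C ∧ ∀ P Q : R3 → ℝ,
      MemLp P (ENNReal.ofReal (2 * α)) (volume : Measure R3) →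
      MemLp Q (ENNReal.ofReal (2 * α)) (volume : Measure R3) →
      MemLp (fun x => g (P x) - 1 + -deriv g 0 * P x) 2 (volume : Measure R3) ∧
      eLpNorm
          (fun x => (g (P x) - 1 + -deriv g 0 * P x) - (g (Q x) - 1 + -deriv g 0 * Q x)) 2
          (volume : Measure R3) ≤
        ENNReal.ofReal
          (C * ((eLpNorm P (ENNReal.ofReal (2 * α)) volume).toReal +
                (eLpNorm Q (ENNReal.ofReal (2 * α)) volume).toReal) ^ (α - 1) *
            (eLpNorm (fun x => P x - Q x) (ENNReal.ofReal (2 * α)) volume).toReal) :=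
  B_maps_L2alpha_to_L2_continuously_general g α hα hg

end
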